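/- Let M be a matroid on a linearly ordered ground set, and let I, J be two distinct NBC sets of M of the same cardinality ℓ. Then there is no permutation τ of J such that the flag of closures cl({j_{τ(ℓ)}}) ⊆ cl({j_{τ(ℓ)}, j_{τ(ℓ-1)}}) ⊆ ... ⊆ cl(J) equals the flag cl({i_ℓ}) ⊆ cl({i_ℓ, i_{ℓ-1}}) ⊆ ... ⊆ cl(I), where I = (i_1 < ... < i_ℓ) is listed in increasing order. -/

import Mathlib

open scoped BigOperators
open scoped Matroid

/-- A circuit: a minimal dependent set. -/
def IsCircuit {n : ℕ} (M : Matroid (Fin n)) (C : Finset (Fin n)) : Prop :=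
  M.Dep ↑C ∧ ∀ D : Finset (Fin n), D ⊂ C → ¬ M.Dep ↑D

/-- A broken circuit: a circuit (of size > 1) with its minimum removed. -/
def IsBrokenCircuit {n : ℕ} (M : Matroid (Fin n)) (B : Finset (Fin n)) : Prop :=
  ∃ (C : Finset (Fin n)) (a : Fin n), IsCircuit M C ∧ 1 < C.card ∧ a ∈ C ∧
    (∀ b ∈ C, a ≤ b) ∧ B = C.erase a

/-- A no-broken-circuit set. -/
def NBCSet {n : ℕ} (M : Matroid (Fin n)) (I : Finset (Fin n)) : Prop :=
  M.Indep ↑I ∧ ∀ B ⊆ I, ¬ IsBrokenCircuit M B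

/-- A unidependent set: contains exactly one circuit. -/
def Unidep {n : ℕ} (M : Matroid (Fin n)) (U : Finset (Fin n)) : Prop :=
  ↑U ⊆ M.E ∧ ∃! C : Finset (Fin n), C ⊆ U ∧ IsCircuit M C

/-- x is a loop. -/
def IsLoopM {n : ℕ} (M : Matroid (Fin n)) (x : Fin n) : Prop := M.Dep {x}

/-- Deletion of a single element. -/
noncomputable def mdel {n : ℕ} (M : Matroid (Fin n)) (x : Fin n) : Matroid (Fin n) :=
  M ↾ (M.E \ {x})

/-- Contraction of a single element, via duality. -/
noncomputable def mcon {n : ℕ} (M : Matroid (Fin n)) (x : Fin n) : Matroid (Fin n) :=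
  (M✶ ↾ (M.E \ {x}))✶

open scoped Classical in
/-- The rank of a finite set: maximal cardinality of an independent subset. -/
noncomputable def rkFin {n : ℕ} (M : Matroid (Fin n)) (U : Finset (Fin n)) : ℕ :=
  (U.powerset.filter fun I : Finset (Fin n) => M.Indep (↑I : Set (Fin n))).sup Finset.card

/-- A simple matroid with ground set everything. -/
def SimpleGround {n : ℕ} (M : Matroid (Fin n)) : Prop :=
  M.E = Set.univ ∧ (∀ i : Fin n, M.Indep {i}) ∧
    ∀ i j : Fin n, i ≠ j → M.Indep {i, j}

/-- Number of inversions of a list. -/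
def listInv {n : ℕ} : List (Fin n) → ℕ
  | [] => 0
  | a :: t => (t.countP fun b => decide (b < a)) + listInv t

/-- χ evaluated on an ordered set, with the sign convention χ(X^σ) = sgn(σ) χ(X). -/
def ochi {n : ℕ} {K : Type*} [Field K] (χ : Finset (Fin n) → K) (l : List (Fin n)) : K :=
  (-1 : K) ^ listInv l * χ l.toFinset

/-- The flag of flats associated to an ordered set: closures of its suffixes. -/
def flagOf {n : ℕ} (M : Matroid (Fin n)) (l : List (Fin n)) : List (Set (Fin n)) :=
  l.tails.map fun t => M.closure ↑t.toFinset

/-- An element `b` is active in `I`: it lies in `cl(I) \ I` and is the minimum of the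
(unique) circuit contained in `I ∪ {b}`. -/
def ActiveIn {n : ℕ} (M : Matroid (Fin n)) (I : Finset (Fin n)) (b : Fin n) : Prop :=
  b ∈ M.closure ↑I ∧ b ∉ I ∧
    ∃ C : Finset (Fin n), C ⊆ insert b I ∧ IsCircuit M C ∧ ∀ c ∈ C, b ≤ c


/-- An inactive unidependent set: `min C(U)` is the minimal active element of
`U \\ min C(U)`. -/
def InactiveUnidep {n : ℕ} (M : Matroid (Fin n)) (U : Finset (Fin n)) : Prop :=
  Unidep M U ∧ ∃ (C : Finset (Fin n)) (a : Fin n), C ⊆ U ∧ IsCircuit M C ∧ a ∈ C ∧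
    (∀ b ∈ C, a ≤ b) ∧ ∀ b : Fin n, ActiveIn M (U.erase a) b → a ≤ b

section Alg

variable {n : ℕ} {K : Type*} [Field K]

/-- The defining relations of the graded algebra `E`: squares of generators vanish and
generators commute up to the nonzero scalars `β i j` (for `i < j`). -/
inductive ERel (n : ℕ) (K : Type*) [Field K] (β : Fin n → Fin n → K) :
    FreeAlgebra K (Fin n) → FreeAlgebra K (Fin n) → Prop
  | sq (i : Fin n) : ERel n K β (FreeAlgebra.ι K i * FreeAlgebra.ι K i) 0
  | comm {i j : Fin n} (h : i < j) :
      ERel n K β (FreeAlgebra.ι K j * FreeAlgebra.ι K i)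
        (β i j • (FreeAlgebra.ι K i * FreeAlgebra.ι K j))

/-- The algebra `E` generated by `e_1, …, e_n` with `e_i² = 0`, `e_j e_i = β i j • e_i e_j`. -/
abbrev EAlg (n : ℕ) (K : Type*) [Field K] (β : Fin n → Fin n → K) := RingQuot (ERel n K β)

/-- The generator `e_i` of `E`. -/
noncomputable def gen (β : Fin n → Fin n → K) (i : Fin n) : EAlg n K β :=
  RingQuot.mkAlgHom K (ERel n K β) (FreeAlgebra.ι K i)

/-- `e_X`: the product of the generators indexed by `X`, in increasing order. -/
noncomputable def eset (β : Fin n → Fin n → K) (X : Finset (Fin n)) : EAlg n K β :=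
  ((X.sort (· ≤ ·)).map (gen β)).prod

/-- The χ-boundary `∂e_X = Σ_p (-1)^p χ(X \ i_p) e_{X \ i_p}` (with `X = {i_1 < … < i_m}`,
`p` running from 1 to m). -/
noncomputable def bdry (β : Fin n → Fin n → K) (χ : Finset (Fin n) → K)
    (X : Finset (Fin n)) : EAlg n K β :=
  ((X.sort (· ≤ ·)).zipIdx.map fun pi =>
    ((-1 : K) ^ (pi.2 + 1) * χ (X.erase pi.1)) • eset β (X.erase pi.1)).sum

end Alg

section Chi

variable {n : ℕ} {K : Type*} [Field K]

/-- Condition (UC1). -/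
def UC1 (M : Matroid (Fin n)) (χ : Finset (Fin n) → K) : Prop :=
  ∀ I : Finset (Fin n), χ I ≠ 0 ↔ M.Indep ↑I

/-- Condition (UC2). -/
def UC2 (β : Fin n → Fin n → K) (M : Matroid (Fin n)) (χ : Finset (Fin n) → K) : Prop :=
  ∀ U U' : Finset (Fin n), Unidep M U → Unidep M U' → U' ⊆ U →
    ∃ ε : K, ε ≠ 0 ∧ bdry β χ U = ε • (bdry β χ U' * eset β (U \ U'))

/-- The (right) ideal `I_χ(M)` of `E`, as a `K`-subspace: it is spanned by the products
of the boundaries of circuits of size `> 1` (and of the generators indexed by loops)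
with arbitrary elements of `E`. -/
noncomputable def chiIdeal (β : Fin n → Fin n → K) (M : Matroid (Fin n))
    (χ : Finset (Fin n) → K) : Submodule K (EAlg n K β) :=
  Submodule.span K
    ({ y | ∃ C : Finset (Fin n), IsCircuit M C ∧ 1 < C.card ∧
        ∃ z : EAlg n K β, y = bdry β χ C * z } ∪
     { y | ∃ i : Fin n, IsCircuit M {i} ∧ ∃ z : EAlg n K β, y = gen β i * z })

/-- The χ-algebra `A_χ(M) = E / I_χ(M)` (as a `K`-vector space). -/
abbrev AChi (β : Fin n → Fin n → K) (M : Matroid (Fin n)) (χ : Finset (Fin n) → K) :=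
  EAlg n K β ⧸ chiIdeal β M χ

/-- The residue class `[e_X]` in `A_χ(M)`. -/
noncomputable def cls (β : Fin n → Fin n → K) (M : Matroid (Fin n))
    (χ : Finset (Fin n) → K) (X : Finset (Fin n)) : AChi β M χ :=
  Submodule.Quotient.mk (eset β X)

/-- The induced map `χ_{M/x}`, `I ↦ χ(I * x)`. -/
def chiC (χ : Finset (Fin n) → K) (x : Fin n) : Finset (Fin n) → K :=
  fun I => ochi χ (I.sort (· ≤ ·) ++ [x])

/-- Iterated single-element contraction along a list (the head is contracted last). -/
noncomputable def contrList (M : Matroid (Fin n)) : List (Fin n) → Matroid (Fin n)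
  | [] => M
  | x :: t => mcon (contrList M t) x

/-- Iterated induced `χ` along a list. -/
def chiL (χ : Finset (Fin n) → K) : List (Fin n) → (Finset (Fin n) → K)
  | [] => χ
  | x :: t => chiC (chiL χ t) x

/-- The iterated residue `p_{I^σ} = p_{i_{σ(1)}} ∘ ⋯ ∘ p_{i_{σ(ℓ)}}` associated to a family
`P` of single-element residue maps and an ordered set (a list). -/
noncomputable def pIter (β : Fin n → Fin n → K)
    (P : ∀ (M : Matroid (Fin n)) (χ : Finset (Fin n) → K) (x : Fin n),
      AChi β M χ →ₗ[K] AChi β (mcon M x) (chiC χ x))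
    (M : Matroid (Fin n)) (χ : Finset (Fin n) → K) :
    (l : List (Fin n)) → (AChi β M χ →ₗ[K] AChi β (contrList M l) (chiL χ l))
  | [] => LinearMap.id
  | x :: t => (P (contrList M t) (chiL χ t) x).comp (pIter β P M χ t)

/-- The defining property of the residue map `p_x` on (classes of) independent sets. -/
def ResFormula (β : Fin n → Fin n → K)
    (P : ∀ (M : Matroid (Fin n)) (χ : Finset (Fin n) → K) (x : Fin n),
      AChi β M χ →ₗ[K] AChi β (mcon M x) (chiC χ x)) : Prop :=
  ∀ (M : Matroid (Fin n)) (χ : Finset (Fin n) → K) (x : Fin n), ¬ IsLoopM M x →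
    ∀ I : Finset (Fin n), M.Indep ↑I →
      (x ∈ I → P M χ x (cls β M χ I) = cls β (mcon M x) (chiC χ x) (I.erase x)) ∧
      (∀ y ∈ I, IsCircuit M {x, y} → P M χ x (cls β M χ I) =
        (ochi χ ((I.erase y).sort (· ≤ ·) ++ [x]) /
          ochi χ ((I.erase y).sort (· ≤ ·) ++ [y])) •
            cls β (mcon M x) (chiC χ x) (I.erase y)) ∧
      (x ∉ I → (∀ y ∈ I, ¬ IsCircuit M {x, y}) → P M χ x (cls β M χ I) = 0)

end Chi

/-!
Compare the two flags from their small end. If the suffixes of `I` and of the list of `J`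
after position `k` have the same underlying set `S`, the next elements `a ∈ I` and `b ∈ J` span
the same flat over `S`. The smaller of the two then lies in the flat spanned by `S` and the other
one while lying below all of these elements, so the fundamental circuit it forms with them would
make a broken circuit of an NBC set unless it is a loop, which an element of an independent set
is not. Hence `a = b`, and inductively `I = J`.
-/

lemma isCircuit_of_isCircuit_coe {n : ℕ} {M : Matroid (Fin n)} {C : Finset (Fin n)}
    (hC : M.IsCircuit ↑C) : IsCircuit M C :=
  ⟨hC.dep, fun _ hD hDdep ↦
    hDdep.not_indep ((Matroid.isCircuit_iff_forall_ssubset.1 hC).2 (Finset.coe_ssubset.2 hD))⟩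

lemma NBCSet.isLoop_of_mem_closure {n : ℕ} {M : Matroid (Fin n)} {T X : Finset (Fin n)}
    {a : Fin n} (hT : NBCSet M T) (hXT : X ⊆ T) (ha : a ∈ M.closure ↑X)
    (hlt : ∀ x ∈ X, a < x) : M.IsLoop a := by
  by_contra hloop
  have haX : a ∉ (↑X : Set (Fin n)) := fun h ↦ lt_irrefl a (hlt a h)
  have hcirc := (hT.1.subset (Finset.coe_subset.2 hXT)).fundCircuit_isCircuit ha haX
  obtain ⟨C, hC⟩ := (M.fundCircuit a ↑X).toFinite.exists_finset_coe
  rw [← hC] at hcirc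
  have hCX : ↑C ⊆ insert a (↑X : Set (Fin n)) := hC ▸ M.fundCircuit_subset_insert a ↑X
  have haC : a ∈ C := by simpa [← hC] using M.mem_fundCircuit a ↑X
  have hCa : C ≠ {a} := by
    rintro rfl
    exact hloop (Matroid.singleton_isCircuit.1 (by simpa using hcirc))
  refine hT.2 (C.erase a) (fun x hx ↦ ?_)
    ⟨C, a, isCircuit_of_isCircuit_coe hcirc, ?_, haC, fun b hb ↦ ?_, rfl⟩
  · obtain ⟨hxa, hxC⟩ := Finset.mem_erase.1 hx
    exact hXT (by simpa [hxa] using hCX hxC)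
  · exact Finset.one_lt_card_iff_nontrivial.2
      ((Finset.nontrivial_iff_ne_singleton haC).2 hCa)
  · rcases hCX hb with rfl | hbX
    exacts [le_rfl, (hlt b hbX).le]

lemma eq_of_closure_insert_eq {n : ℕ} {M : Matroid (Fin n)} {I J S : Finset (Fin n)}
    {a b : Fin n} (hI : NBCSet M I) (hJ : NBCSet M J) (haI : insert a S ⊆ I)
    (hbJ : insert b S ⊆ J) (haS : ∀ x ∈ S, a < x)
    (hcl : M.closure ↑(insert b S) = M.closure ↑(insert a S)) : a = b := by
  have hindep {T U : Finset (Fin n)} (hU : M.Indep ↑U) (hTU : T ⊆ U) : M.Indep ↑T :=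
    hU.subset (Finset.coe_subset.2 hTU)
  have hmem {c : Fin n} {T : Finset (Fin n)} (hT : M.Indep ↑(insert c T)) :
      c ∈ M.closure ↑(insert c T) :=
    M.mem_closure_of_mem (by simp) hT.subset_ground
  rcases lt_trichotomy a b with hab | rfl | hab
  · have hloop := hJ.isLoop_of_mem_closure hbJ (hcl ▸ hmem (hindep hI.1 haI)) fun x hx ↦ by
      rcases Finset.mem_insert.1 hx with rfl | hxS
      exacts [hab, haS x hxS]
    exact absurd (hindep hI.1 haI) (hloop.not_indep_of_mem (by simp))
  · rfl
  · have hloop := hI.isLoop_of_mem_closure haI (hcl ▸ hmem (hindep hJ.1 hbJ)) fun x hx ↦ by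
      rcases Finset.mem_insert.1 hx with rfl | hxS
      exacts [hab, hab.trans (haS x hxS)]
    exact absurd (hindep hJ.1 hbJ) (hloop.not_indep_of_mem (by simp))

lemma flagOf_cons {n : ℕ} (M : Matroid (Fin n)) (a : Fin n) (l : List (Fin n)) :
    flagOf M (a :: l) = M.closure ↑(insert a l.toFinset) :: flagOf M l := by
  simp only [flagOf, List.tails_cons, List.map_cons, List.toFinset_cons, Finset.coe_insert]

lemma length_flagOf {n : ℕ} (M : Matroid (Fin n)) (l : List (Fin n)) :
    (flagOf M l).length = l.length + 1 := by
  simp [flagOf]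

lemma toFinset_eq_of_flagOf_eq {n : ℕ} {M : Matroid (Fin n)} {I J : Finset (Fin n)}
    (hI : NBCSet M I) (hJ : NBCSet M J) :
    ∀ {li lj : List (Fin n)}, li.Pairwise (· < ·) → li.toFinset ⊆ I → lj.toFinset ⊆ J →
      flagOf M lj = flagOf M li → lj.toFinset = li.toFinset
  | [], [], _, _, _, _ => rfl
  | [], _ :: _, _, _, _, h | _ :: _, [], _, _, _, h => by
    simpa [length_flagOf] using congrArg List.length h
  | a :: li, b :: lj, hsort, hli, hlj, h => by
    rw [flagOf_cons, flagOf_cons, List.cons.injEq] at h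
    rw [List.pairwise_cons] at hsort
    rw [List.toFinset_cons] at hli hlj
    have hS : lj.toFinset = li.toFinset := toFinset_eq_of_flagOf_eq hI hJ hsort.2
      ((Finset.subset_insert _ _).trans hli) ((Finset.subset_insert _ _).trans hlj) h.2
    have hab : a = b := by
      rw [hS] at hlj h
      exact eq_of_closure_insert_eq hI hJ hli hlj
        (fun x hx ↦ hsort.1 x (List.mem_toFinset.1 hx)) h.1
    simp [hS, hab]

theorem nbc_flags_distinct_general {n : ℕ} (M : Matroid (Fin n)) (I J : Finset (Fin n))
    (hI : NBCSet M I) (hJ : NBCSet M J) (hne : I ≠ J) :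
    ¬ ∃ lj : List (Fin n), lj.Nodup ∧ lj.toFinset = J ∧
        flagOf M lj = flagOf M (I.sort (· ≤ ·)) := by
  rintro ⟨lj, -, rfl, hflag⟩
  have h := toFinset_eq_of_flagOf_eq hI hJ I.sortedLT_sort.pairwise
    (I.sort_toFinset _).subset subset_rfl hflag
  exact hne (by rw [h, Finset.sort_toFinset])

/-- two distinct NBC sets of the same cardinality never have equal flags,
for any ordering of `J` (with `I` taken in increasing order). -/
theorem nbc_flags_distinct {n : ℕ} (M : Matroid (Fin n)) (ℓ : ℕ) (I J : Finset (Fin n))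
    (hI : NBCSet M I) (hJ : NBCSet M J) (hIc : I.card = ℓ) (hJc : J.card = ℓ)
    (hne : I ≠ J) :
    ¬ ∃ lj : List (Fin n), lj.Nodup ∧ lj.toFinset = J ∧
        flagOf M lj = flagOf M (I.sort (· ≤ ·)) :=
  nbc_flags_distinct_general M I J hI hJ hne
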